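/- If a set P of points in ℝ² has all pairwise distances integral and contains three non-collinear points, and k is the characteristic of one non-degenerate triangle in P (the squarefree part of 16·area²), then after a suitable isometry every point of P has coordinates of the form (q₁, q₂√k) with q₁, q₂ rational. -/

import Mathlib

/-!
Move `p` to the origin and `q` to `(a, 0)`, `a = |pq| ∈ ℕ`, by a translation followed by a
reflection. By polarization, the inner product of the images of any two points of `S` is
rational, because all distances are integers. Hence the first coordinate `⟪x, (a, 0)⟫ / a` of
every image point is rational, and so is `x₂ r₂ = ⟪x, r⟫ - x₁ r₁`. Heron's formula makes the
area an isometry invariant, so `4 a² r₂² = 16 · area² = k m²`, i.e. `r₂ = ±(m / 2a) √k ≠ 0`,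
and therefore `x₂ = x₂ r₂ / r₂ ∈ ℚ √k`.
-/

/-- The area of the triangle on points `p q r` of the plane: half the absolute value of
the determinant of `(q - p, r - p)`. -/
noncomputable def triArea (p q r : EuclideanSpace ℝ (Fin 2)) : ℝ :=
  |(q 0 - p 0) * (r 1 - p 1) - (q 1 - p 1) * (r 0 - p 0)| / 2

open scoped RealInnerProductSpace

local notation "ℝ²" => EuclideanSpace ℝ (Fin 2)

def IsIntegralPointSet {X : Type*} [PseudoMetricSpace X] (S : Set X) : Prop :=
  ∀ x ∈ S, ∀ y ∈ S, ∃ n : ℕ, dist x y = n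

section InnerProductSpace

variable {E : Type*} [NormedAddCommGroup E] [InnerProductSpace ℝ E]

theorem exists_isometryEquiv_map_pair {p q p' q' : E} (h : dist p q = dist p' q') :
    ∃ f : E ≃ᵢ E, f p = p' ∧ f q = q' := by
  have hnorm : ‖q - p‖ = ‖q' - p'‖ := by
    rwa [dist_comm, dist_eq_norm, dist_comm, dist_eq_norm] at h
  exact ⟨(IsometryEquiv.subRight p).trans
    ((ℝ ∙ ((q - p) - (q' - p')))ᗮ.reflection.toIsometryEquiv.trans (IsometryEquiv.addRight p')),
    by simp, by simp [Submodule.reflection_sub hnorm]⟩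

theorem real_inner_sub_sub_eq_dist (x y p : E) :
    ⟪x - p, y - p⟫ = (dist x p ^ 2 + dist y p ^ 2 - dist x y ^ 2) / 2 := by
  rw [real_inner_eq_norm_mul_self_add_norm_mul_self_sub_norm_sub_mul_self_div_two,
    sub_sub_sub_cancel_right, dist_eq_norm, dist_eq_norm, dist_eq_norm]
  ring

theorem IsIntegralPointSet.exists_rat_inner_map {X : Type*} [PseudoMetricSpace X] {S : Set X}
    (hS : IsIntegralPointSet S) {f : X → E} (hf : Isometry f) {p x y : X} (hp : p ∈ S)
    (hx : x ∈ S) (hy : y ∈ S) (hfp : f p = 0) : ∃ c : ℚ, ⟪f x, f y⟫ = c := by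
  obtain ⟨l, hl⟩ := hS x hx p hp
  obtain ⟨m, hm⟩ := hS y hy p hp
  obtain ⟨n, hn⟩ := hS x hx y hy
  refine ⟨(l ^ 2 + m ^ 2 - n ^ 2) / 2, ?_⟩
  rw [← sub_zero (f x), ← sub_zero (f y), ← hfp, real_inner_sub_sub_eq_dist, hf.dist_eq,
    hf.dist_eq, hf.dist_eq, hl, hm, hn]
  push_cast
  ring

end InnerProductSpace

theorem inner_eq_fin_two (y z : ℝ²) : ⟪y, z⟫ = y 0 * z 0 + y 1 * z 1 := by
  simp [PiLp.inner_apply, Fin.sum_univ_two, mul_comm]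

theorem dist_sq_eq_fin_two (y z : ℝ²) : dist y z ^ 2 = (y 0 - z 0) ^ 2 + (y 1 - z 1) ^ 2 := by
  rw [EuclideanSpace.dist_eq, Real.sq_sqrt (by positivity)]
  simp [Fin.sum_univ_two, Real.dist_eq, sq_abs]

section StandardPosition

variable {S : Set ℝ²} {f : ℝ² → ℝ²} {p q r x : ℝ²} {a : ℕ}

theorem IsIntegralPointSet.exists_rat_apply_zero (hS : IsIntegralPointSet S) (hf : Isometry f)
    (hp : p ∈ S) (hq : q ∈ S) (hx : x ∈ S) (ha : a ≠ 0) (hfp : f p = 0)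
    (hfq : f q = WithLp.toLp 2 ![(a : ℝ), 0]) : ∃ c : ℚ, f x 0 = c := by
  obtain ⟨c, hc⟩ := hS.exists_rat_inner_map hf hp hx hq hfp
  refine ⟨c / a, ?_⟩
  rw [inner_eq_fin_two, hfq] at hc
  simp only [Fin.isValue, Matrix.cons_val_zero, Matrix.cons_val_one, Matrix.cons_val_fin_one,
    mul_zero, add_zero] at hc
  push_cast
  rw [← hc]
  field_simp

theorem IsIntegralPointSet.exists_rat_apply_one_mul (hS : IsIntegralPointSet S) (hf : Isometry f)
    (hp : p ∈ S) (hq : q ∈ S) (hr : r ∈ S) (hx : x ∈ S) (ha : a ≠ 0) (hfp : f p = 0)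
    (hfq : f q = WithLp.toLp 2 ![(a : ℝ), 0]) : ∃ d : ℚ, f x 1 * f r 1 = d := by
  obtain ⟨c, hc⟩ := hS.exists_rat_inner_map hf hp hx hr hfp
  obtain ⟨c₁, h₁⟩ := hS.exists_rat_apply_zero hf hp hq hx ha hfp hfq
  obtain ⟨c₂, h₂⟩ := hS.exists_rat_apply_zero hf hp hq hr ha hfp hfq
  refine ⟨c - c₁ * c₂, ?_⟩
  rw [inner_eq_fin_two, h₁, h₂] at hc
  push_cast
  linarith

end StandardPosition

theorem sixteen_mul_triArea_sq (p q r : ℝ²) :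
    16 * triArea p q r ^ 2 =
      4 * dist p q ^ 2 * dist p r ^ 2 - (dist p q ^ 2 + dist p r ^ 2 - dist q r ^ 2) ^ 2 := by
  simp only [triArea, dist_sq_eq_fin_two, div_pow, sq_abs]
  ring

theorem triArea_nonneg (p q r : ℝ²) : 0 ≤ triArea p q r := by
  unfold triArea
  positivity

theorem Isometry.triArea_eq {f : ℝ² → ℝ²} (hf : Isometry f) (p q r : ℝ²) :
    triArea (f p) (f q) (f r) = triArea p q r := by
  have h := sixteen_mul_triArea_sq (f p) (f q) (f r)
  rw [hf.dist_eq, hf.dist_eq, hf.dist_eq, ← sixteen_mul_triArea_sq,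
    mul_right_inj' (by norm_num)] at h
  exact (pow_left_inj₀ (triArea_nonneg _ _ _) (triArea_nonneg _ _ _) two_ne_zero).1 h

theorem triArea_zero_toLp (a : ℝ) (z : ℝ²) :
    triArea 0 (WithLp.toLp 2 ![a, 0]) z = |a * z 1| / 2 := by
  simp [triArea]

theorem collinear_of_triArea_eq_zero {p q r : ℝ²} (h : triArea p q r = 0) :
    Collinear ℝ ({p, q, r} : Set ℝ²) := by
  rcases eq_or_ne q p with rfl | hqp
  · simpa using collinear_pair ℝ q r
  have hdet : (q 0 - p 0) * (r 1 - p 1) - (q 1 - p 1) * (r 0 - p 0) = 0 := by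
    simpa [triArea] using h
  have hn : (q 0 - p 0) ^ 2 + (q 1 - p 1) ^ 2 ≠ 0 := by
    rw [← dist_sq_eq_fin_two]
    exact pow_ne_zero 2 (dist_ne_zero.2 hqp)
  set t := ((q 0 - p 0) * (r 0 - p 0) + (q 1 - p 1) * (r 1 - p 1)) /
    ((q 0 - p 0) ^ 2 + (q 1 - p 1) ^ 2)
  have hr : r = t • (q - p) +ᵥ p := by
    ext i
    fin_cases i
    · simp only [Fin.zero_eta, Fin.isValue, vadd_eq_add, PiLp.add_apply, PiLp.smul_apply,
        PiLp.sub_apply, smul_eq_mul, t]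
      field_simp
      linear_combination -(q 1 - p 1) * hdet
    · simp only [Fin.mk_one, Fin.isValue, vadd_eq_add, PiLp.add_apply, PiLp.smul_apply,
        PiLp.sub_apply, smul_eq_mul, t]
      field_simp
      linear_combination (q 0 - p 0) * hdet
  rw [collinear_iff_of_mem (Set.mem_insert p _)]
  refine ⟨q - p, ?_⟩
  rintro x (rfl | rfl | rfl)
  · exact ⟨0, by simp⟩
  · exact ⟨1, by simp⟩
  · exact ⟨t, hr⟩

theorem exists_rat_mul_sqrt_of_sq_eq {t : ℝ} {k : ℕ} {c : ℚ} (h : t ^ 2 = k * c ^ 2) :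
    ∃ c' : ℚ, t = c' * √k := by
  have h' : t ^ 2 = (c * √k) ^ 2 := by rw [h, mul_pow, Real.sq_sqrt k.cast_nonneg, mul_comm]
  rcases sq_eq_sq_iff_eq_or_eq_neg.1 h' with ht | ht
  · exact ⟨c, ht⟩
  · exact ⟨-c, by rw [ht]; push_cast; ring⟩

theorem exists_rat_mul_sqrt_of_mul_eq {s t : ℝ} {k : ℕ} {c d : ℚ} (ht : t ^ 2 = k * c ^ 2)
    (ht0 : t ≠ 0) (hs : s * t = d) : ∃ q : ℚ, s = q * √k := by
  obtain ⟨c', rfl⟩ := exists_rat_mul_sqrt_of_sq_eq ht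
  have hc' : (c' : ℝ) ≠ 0 := left_ne_zero_of_mul ht0
  have hk : (k : ℝ) ≠ 0 := by
    rintro hk
    simp [hk] at ht0
  refine ⟨d / (c' * k), ?_⟩
  push_cast
  rw [← hs]
  field_simp
  rw [Real.sq_sqrt k.cast_nonneg]

theorem integral_point_set_coordinates_general
    (S : Set (EuclideanSpace ℝ (Fin 2)))
    (hint : ∀ p ∈ S, ∀ q ∈ S, ∃ n : ℕ, dist p q = n)
    (p q r : EuclideanSpace ℝ (Fin 2)) (hp : p ∈ S) (hq : q ∈ S) (hr : r ∈ S)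
    (hncol : ¬ Collinear ℝ ({p, q, r} : Set (EuclideanSpace ℝ (Fin 2))))
    (k : ℕ)
    (hchar : ∃ m : ℕ, 16 * triArea p q r ^ 2 = (k : ℝ) * (m : ℝ) ^ 2) :
    ∃ f : EuclideanSpace ℝ (Fin 2) ≃ᵢ EuclideanSpace ℝ (Fin 2),
      ∀ x ∈ S, ∃ q₁ q₂ : ℚ,
        f x = (WithLp.toLp 2 ![(q₁ : ℝ), (q₂ : ℝ) * Real.sqrt k] : EuclideanSpace ℝ (Fin 2)) := by
  have hS : IsIntegralPointSet S := hint
  obtain ⟨m, hm⟩ := hchar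
  obtain ⟨a, ha⟩ := hint p hp q hq
  have ha0 : a ≠ 0 := by
    rintro rfl
    exact ne₁₂_of_not_collinear hncol (dist_eq_zero.1 (by simpa using ha))
  obtain ⟨F, hFp, hFq⟩ := exists_isometryEquiv_map_pair (p := p) (q := q) (p' := 0)
    (q' := WithLp.toLp 2 ![(a : ℝ), 0]) (by simp [ha, EuclideanSpace.dist_eq])
  have harea : triArea p q r = |a * F r 1| / 2 := by
    rw [← F.isometry.triArea_eq, hFp, hFq, triArea_zero_toLp]
  have hr1 : F r 1 ≠ 0 := fun h0 ↦
    hncol (collinear_of_triArea_eq_zero (by rw [harea, h0]; simp))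
  have hr1sq : F r 1 ^ 2 = k * (((m : ℚ) / (2 * a) : ℚ) : ℝ) ^ 2 := by
    rw [harea, div_pow, sq_abs] at hm
    push_cast
    field_simp
    linear_combination hm
  refine ⟨F, fun x hx ↦ ?_⟩
  obtain ⟨q₁, hq₁⟩ := hS.exists_rat_apply_zero F.isometry hp hq hx ha0 hFp hFq
  obtain ⟨d, hd⟩ := hS.exists_rat_apply_one_mul F.isometry hp hq hr hx ha0 hFp hFq
  obtain ⟨q₂, hq₂⟩ := exists_rat_mul_sqrt_of_mul_eq hr1sq hr1 hd
  refine ⟨q₁, q₂, ?_⟩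
  ext i
  fin_cases i <;> simp [hq₁, hq₂]

/-- If a plane point set has pairwise integral distances and contains a non-degenerate
triangle of characteristic `k` (the squarefree part of `16·area²`), then after a
suitable isometry every point of the set has coordinates `(q₁, q₂·√k)` with
`q₁, q₂` rational. -/
theorem integral_point_set_coordinates
    (S : Set (EuclideanSpace ℝ (Fin 2)))
    (hint : ∀ p ∈ S, ∀ q ∈ S, ∃ n : ℕ, dist p q = n)
    (p q r : EuclideanSpace ℝ (Fin 2)) (hp : p ∈ S) (hq : q ∈ S) (hr : r ∈ S)
    (hncol : ¬ Collinear ℝ ({p, q, r} : Set (EuclideanSpace ℝ (Fin 2))))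
    (k : ℕ) (hk : Squarefree k)
    (hchar : ∃ m : ℕ, 16 * triArea p q r ^ 2 = (k : ℝ) * (m : ℝ) ^ 2) :
    ∃ f : EuclideanSpace ℝ (Fin 2) ≃ᵢ EuclideanSpace ℝ (Fin 2),
      ∀ x ∈ S, ∃ q₁ q₂ : ℚ,
        f x = (WithLp.toLp 2 ![(q₁ : ℝ), (q₂ : ℝ) * Real.sqrt k] : EuclideanSpace ℝ (Fin 2)) :=
  integral_point_set_coordinates_general S hint p q r hp hq hr hncol k hchar
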